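/- The group generated by the matrices S_a = [[-1, 0], [τ, 1]] and S_b = [[1, τ], [0, -1]] (over ℝ, τ the golden ratio) has order 10 and is isomorphic to the dihedral group D₅. -/

import Mathlib

/-!
`Sa` and `Sb` are involutions (reflections of determinant `-1`), and since `τ² = τ + 1` their
product `Sa * Sb` is a rotation of order `5`. Any two involutions `s, t` of a group whose product
has order `n`, with `s` not a power of `s * t`, generate a copy of `DihedralGroup n`: the map
`r i ↦ (s * t) ^ i`, `sr i ↦ s * (s * t) ^ i` is an injective homomorphism onto `⟨s, t⟩`.
Here `Sa ∉ ⟨Sa * Sb⟩` because the determinant separates them.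
-/

section

variable {G : Type*} [Group G] {n : ℕ} {a b : G}

theorem pow_val_add [NeZero n] (ha : a ^ n = 1) (i j : ZMod n) :
    a ^ (i + j).val = a ^ i.val * a ^ j.val := by
  rw [ZMod.val_add, ← pow_eq_pow_mod _ ha, pow_add]

theorem pow_val_neg [NeZero n] (ha : a ^ n = 1) (i : ZMod n) : a ^ (-i).val = (a ^ i.val)⁻¹ :=
  eq_inv_of_mul_eq_one_left (by rw [← pow_val_add ha, neg_add_cancel, ZMod.val_zero, pow_zero])

theorem pow_mul_eq_mul_inv_pow (hb : b * b = 1) (hab : b * a * b = a⁻¹) (k : ℕ) :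
    a ^ k * b = b * (a ^ k)⁻¹ := by
  have hb' : b⁻¹ = b := inv_eq_of_mul_eq_one_right hb
  have hconj : b * a ^ k * b = (a ^ k)⁻¹ := by
    simpa only [hb', hab, inv_pow] using (conj_pow (a := b) (b := a) (i := k)).symm
  rw [← hconj, ← mul_assoc, ← mul_assoc, hb, one_mul]

theorem mul_mul_mul_eq_inv_of_mul_self {s t : G} (hs : s * s = 1) (ht : t * t = 1) :
    s * (s * t) * s = (s * t)⁻¹ := by
  rw [← mul_assoc, hs, one_mul, mul_inv_rev, inv_eq_of_mul_eq_one_right hs,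
    inv_eq_of_mul_eq_one_right ht]

theorem closure_mul_pair_eq (s t : G) :
    Subgroup.closure {s * t, s} = Subgroup.closure {s, t} := by
  apply le_antisymm <;>
    rw [Subgroup.closure_le, Set.insert_subset_iff, Set.singleton_subset_iff]
  · exact ⟨mul_mem (Subgroup.subset_closure (by simp)) (Subgroup.subset_closure (by simp)),
      Subgroup.subset_closure (by simp)⟩
  · refine ⟨Subgroup.subset_closure (by simp), ?_⟩
    simpa using mul_mem (Subgroup.inv_mem _ (Subgroup.subset_closure (by simp : s ∈ {s * t, s})))
      (Subgroup.subset_closure (by simp : s * t ∈ {s * t, s}))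

theorem notMem_zpowers_of_map_eq_one {H : Type*} [Group H] (φ : G →* H) (ha : φ a = 1)
    (hb : φ b ≠ 1) : b ∉ Subgroup.zpowers a :=
  fun h => hb (Subgroup.zpowers_le.mpr (φ.mem_ker.mpr ha) h)

end

namespace DihedralGroup

variable {G : Type*} [Group G] {n : ℕ} [NeZero n] {a b : G}

def lift (ha : a ^ n = 1) (hb : b * b = 1) (hab : b * a * b = a⁻¹) : DihedralGroup n →* G where
  toFun
    | r i => a ^ i.val
    | sr i => b * a ^ i.val
  map_one' := by rw [one_def]; simp
  map_mul' := by
    rintro (i | i) (j | j) <;>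
      simp only [r_mul_r, r_mul_sr, sr_mul_r, sr_mul_sr, sub_eq_neg_add, pow_val_add ha,
        pow_val_neg ha]
    · rw [← mul_assoc, ← mul_assoc, pow_mul_eq_mul_inv_pow hb hab]
    · rw [mul_assoc]
    · rw [mul_assoc b, ← mul_assoc (a ^ i.val), pow_mul_eq_mul_inv_pow hb hab, ← mul_assoc,
        ← mul_assoc, hb, one_mul]

section lift

variable (ha : a ^ n = 1) (hb : b * b = 1) (hab : b * a * b = a⁻¹)

@[simp] theorem lift_r (i : ZMod n) : lift ha hb hab (r i) = a ^ i.val := rfl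

@[simp] theorem lift_sr (i : ZMod n) : lift ha hb hab (sr i) = b * a ^ i.val := rfl

theorem lift_r_one : lift ha hb hab (r 1) = a := by
  rw [lift_r, ZMod.val_one_eq_one_mod, ← pow_eq_pow_mod _ ha, pow_one]

theorem lift_injective (hn : orderOf a = n) (hba : b ∉ Subgroup.zpowers a) :
    Function.Injective (lift ha hb hab) := by
  rw [injective_iff_map_eq_one]
  rintro (i | i) h
  · have hdvd : orderOf a ∣ i.val := orderOf_dvd_of_pow_eq_one h
    rw [hn] at hdvd
    rw [(ZMod.val_eq_zero i).mp (Nat.eq_zero_of_dvd_of_lt hdvd i.val_lt), r_zero]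
  · refine absurd ?_ hba
    rw [eq_inv_of_mul_eq_one_left h]
    exact Subgroup.inv_mem _ (Subgroup.npow_mem_zpowers a _)

theorem range_lift : (lift ha hb hab).range = Subgroup.closure {a, b} := by
  apply le_antisymm
  · rintro _ ⟨i | i, rfl⟩
    · exact pow_mem (Subgroup.subset_closure (by simp)) _
    · exact mul_mem (Subgroup.subset_closure (by simp))
        (pow_mem (Subgroup.subset_closure (by simp)) _)
  · rw [Subgroup.closure_le, Set.insert_subset_iff, Set.singleton_subset_iff]
    exact ⟨⟨r 1, lift_r_one ha hb hab⟩, ⟨sr 0, by simp⟩⟩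

end lift

noncomputable def mulEquivClosureOfMulSelf {s t : G} (hs : s * s = 1) (ht : t * t = 1)
    (hst : orderOf (s * t) = n) (hs_notMem : s ∉ Subgroup.zpowers (s * t)) :
    DihedralGroup n ≃* Subgroup.closure {s, t} :=
  have ha := hst ▸ pow_orderOf_eq_one (s * t)
  have hab := mul_mul_mul_eq_inv_of_mul_self hs ht
  (MonoidHom.ofInjective (lift_injective ha hs hab hst hs_notMem)).trans
    (MulEquiv.subgroupCongr ((range_lift ha hs hab).trans (closure_mul_pair_eq s t)))

end DihedralGroup

theorem Matrix.pow_five_eq_one_of_sq_eq_add_one {R : Type*} [CommRing R] {c : R}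
    (hc : c ^ 2 = c + 1) : !![-1, -c; c, c] ^ 5 = 1 := by
  simp only [pow_succ, pow_zero, one_mul, Matrix.mul_fin_two, Matrix.one_fin_two]
  ext i j
  fin_cases i <;> fin_cases j <;> simp <;> grind

theorem generated_group_is_dihedral_five
    (τ : ℝ) (hτ : τ = (1 + Real.sqrt 5) / 2)
    (Sa Sb : GL (Fin 2) ℝ)
    (hSa : (Sa : Matrix (Fin 2) (Fin 2) ℝ) = !![-1, 0; τ, 1])
    (hSb : (Sb : Matrix (Fin 2) (Fin 2) ℝ) = !![1, τ; 0, -1]) :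
    Nat.card (Subgroup.closure {Sa, Sb} : Subgroup (GL (Fin 2) ℝ)) = 10 ∧
    Nonempty ((Subgroup.closure {Sa, Sb} : Subgroup (GL (Fin 2) ℝ)) ≃* DihedralGroup 5) := by
  have hτ_sq : τ ^ 2 = τ + 1 := hτ ▸ Real.goldenRatio_sq
  have hSa_sq : Sa * Sa = 1 := Units.ext <| by simp [hSa, Matrix.one_fin_two]
  have hSb_sq : Sb * Sb = 1 := Units.ext <| by simp [hSb, Matrix.one_fin_two]
  have hSaSb : ((Sa * Sb : GL (Fin 2) ℝ) : Matrix (Fin 2) (Fin 2) ℝ) = !![-1, -τ; τ, τ] := by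
    rw [Units.val_mul, hSa, hSb, Matrix.mul_fin_two]
    congr 3 <;> simp
    linear_combination hτ_sq
  have hord : orderOf (Sa * Sb) = 5 := by
    have := Fact.mk Nat.prime_five
    refine orderOf_eq_prime (Units.ext ?_) fun h => ?_
    · rw [Units.val_pow_eq_pow_val, hSaSb, Units.val_one,
        Matrix.pow_five_eq_one_of_sq_eq_add_one hτ_sq]
    · have h00 := congrArg (fun g : GL (Fin 2) ℝ => (g : Matrix (Fin 2) (Fin 2) ℝ) 0 0) h
      norm_num [hSaSb] at h00
  have hdet_Sa : Matrix.GeneralLinearGroup.det Sa = -1 := Units.ext <| by simp [hSa]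
  have hdet_Sb : Matrix.GeneralLinearGroup.det Sb = -1 := Units.ext <| by simp [hSb]
  have hSa_notMem : Sa ∉ Subgroup.zpowers (Sa * Sb) :=
    notMem_zpowers_of_map_eq_one Matrix.GeneralLinearGroup.det
      (by rw [map_mul, hdet_Sa, hdet_Sb, neg_one_mul, neg_neg])
      (by rw [hdet_Sa]; norm_num [Units.ext_iff])
  let e := DihedralGroup.mulEquivClosureOfMulSelf hSa_sq hSb_sq hord hSa_notMem
  exact ⟨by rw [← Nat.card_congr e.toEquiv, DihedralGroup.nat_card], ⟨e.symm⟩⟩
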